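/- arXiv:1506.04717 — 3 statements merged into one kernel-verified Lean document; each statement's English description precedes it below -/
import Mathlib

section
/- The Greenberg function depends only on the integral closure of the ideal: Let V be a Henselian discrete valuation ring with maximal ideal 𝔪_V, satisfying that Frac(V) → Frac(V̂) is separable if char(Frac(V)) > 0. Let f(y) ∈ V[y]^r and g(y) ∈ V[y]^q be vectors of polynomials in y = (y₁,…,y_m), generating ideals I and J of V[y] respectively, and let β_f and β_g denote their Greenberg functions. If the integral closures of I and J in V[y] coincide, then β_f = β_g. -/
/-!
# The Greenberg function depends only on the integral closure of the ideal
-/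

open IsLocalRing

universe u

/-- For a local domain `V` with fraction field `K = Frac V` and maximal-adic completion `V̂`
with fraction field `K̂ = Frac V̂`, the field extension `K → K̂` is separable if and only if
`K̂ ⊗[K] K' ≅ V̂ ⊗[V] K'` is reduced for every finite field extension `K'` of `K`. -/
def HasSeparableCompletionFraction (V : Type u) [CommRing V] [IsDomain V] [IsLocalRing V] :
    Prop :=
  ∀ (K' : Type u) [Field K'] [Algebra (FractionRing V) K']
    [FiniteDimensional (FractionRing V) K']
    [Algebra V K'] [IsScalarTower V (FractionRing V) K'],
    IsReduced (TensorProduct V (AdicCompletion (maximalIdeal V) V) K')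

/-- The Greenberg function of a vector `f` of polynomials over a local ring `V`: `β c` is the
least integer `N` such that every `ybar ∈ V ^ m` with `f (ybar) ≡ 0 mod 𝔪_V ^ N` is congruent
modulo `𝔪_V ^ c` to an exact solution of `f = 0`. -/
noncomputable def greenbergFunction {V : Type u} [CommRing V] [IsLocalRing V] {m r : ℕ}
    (f : Fin r → MvPolynomial (Fin m) V) (c : ℕ) : ℕ :=
  sInf {N : ℕ | ∀ ybar : Fin m → V,
    (∀ i, MvPolynomial.eval ybar (f i) ∈ maximalIdeal V ^ N) →
    ∃ ytil : Fin m → V,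
      (∀ i, MvPolynomial.eval ytil (f i) = 0) ∧
      (∀ j, ytil j - ybar j ∈ maximalIdeal V ^ c)}

/-- The integral closure of an ideal `I` of a commutative ring `R`: the set of `h ∈ R`
satisfying an equation `h ^ n + a_1 h ^ (n - 1) + ⋯ + a_n = 0` with `a_i ∈ I ^ i`. -/
def idealIntegralClosure {R : Type u} [CommRing R] (I : Ideal R) : Set R :=
  {h | ∃ n : ℕ, 0 < n ∧ ∃ a : ℕ → R, (∀ i ∈ Finset.Icc 1 n, a i ∈ I ^ i) ∧
    h ^ n + ∑ i ∈ Finset.Icc 1 n, a i * h ^ (n - i) = 0}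

/-!
Evaluating at `ȳ` turns an equation of integral dependence of `h` over `I` into one of `h(ȳ)`
over the ideal generated by `f(ȳ)`. In the discrete valuation ring `V` every ideal, in particular
`𝔪_V ^ N` and `0`, is principal and hence integrally closed, since `V` is a normal domain. So the
conditions `f(ȳ) ∈ 𝔪_V ^ N` and `f(ȳ) = 0` depend only on the integral closure of `I`, and the
sets whose infima are `β_f(c)` and `β_g(c)` coincide.
-/

section IdealIntegralClosure

variable {R S : Type u} [CommRing R] [CommRing S]

theorem subset_idealIntegralClosure (I : Ideal R) : (I : Set R) ⊆ idealIntegralClosure I := by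
  intro h hh
  refine ⟨1, one_pos, fun _ => -h, fun i hi => ?_, by simp⟩
  rw [Finset.Icc_self, Finset.mem_singleton] at hi
  simpa [hi] using I.neg_mem hh

theorem idealIntegralClosure_mono {I J : Ideal R} (hIJ : I ≤ J) :
    idealIntegralClosure I ⊆ idealIntegralClosure J := by
  rintro h ⟨n, hn, a, ha, heq⟩
  exact ⟨n, hn, a, fun i hi => Ideal.pow_right_mono hIJ i (ha i hi), heq⟩

theorem map_mem_idealIntegralClosure_map (φ : R →+* S) {I : Ideal R} {h : R}
    (hh : h ∈ idealIntegralClosure I) : φ h ∈ idealIntegralClosure (I.map φ) := by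
  obtain ⟨n, hn, a, ha, heq⟩ := hh
  refine ⟨n, hn, fun i => φ (a i), fun i hi => ?_, ?_⟩
  · rw [← Ideal.map_pow]
    exact Ideal.mem_map_of_mem φ (ha i hi)
  · simpa only [map_add, map_pow, map_sum, map_mul, map_zero] using congrArg φ heq

open Polynomial in
theorem Polynomial.monic_X_pow_add_sum_C_mul_X_pow_sub (n : ℕ) (d : ℕ → R) :
    (X ^ n + ∑ i ∈ Finset.Icc 1 n, C (d i) * X ^ (n - i)).Monic := by
  refine monic_X_pow_add ((degree_sum_le _ _).trans_lt ?_)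
  refine (Finset.sup_lt_iff (WithBot.bot_lt_coe n)).mpr fun i hi => ?_
  refine (degree_C_mul_X_pow_le _ _).trans_lt ?_
  obtain ⟨hi1, hin⟩ := Finset.mem_Icc.mp hi
  exact Nat.cast_lt.mpr (by omega)

open Polynomial in
theorem dvd_of_mem_idealIntegralClosure_span_singleton [IsDomain R] [IsIntegrallyClosed R]
    {a h : R} (hh : h ∈ idealIntegralClosure (Ideal.span {a})) : a ∣ h := by
  obtain ⟨n, hn, c, hc, heq⟩ := hh
  simp only [Ideal.span_singleton_pow, Ideal.mem_span_singleton] at hc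
  choose! d hd using hc
  rcases eq_or_ne a 0 with rfl | ha
  · have : h ^ n = 0 := by
      rw [← heq, left_eq_add]
      refine Finset.sum_eq_zero fun i hi => ?_
      have hi0 : i ≠ 0 := by have := (Finset.mem_Icc.mp hi).1; omega
      rw [hd i hi, zero_pow hi0, zero_mul, zero_mul]
    rw [(pow_eq_zero_iff hn.ne').mp this]
  -- `h / a` is a root of the monic polynomial `X ^ n + ∑ (c i / a ^ i) X ^ (n - i)` over `R`.
  let K := FractionRing R
  have ha' : algebraMap R K a ≠ 0 := (map_ne_zero_iff _ (IsFractionRing.injective R K)).mpr ha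
  set t := algebraMap R K h / algebraMap R K a
  have hat : algebraMap R K a * t = algebraMap R K h := mul_div_cancel₀ _ ha'
  let p : R[X] := X ^ n + ∑ i ∈ Finset.Icc 1 n, C (d i) * X ^ (n - i)
  have hroot : p.eval₂ (algebraMap R K) t = 0 := by
    have : algebraMap R K a ^ n * p.eval₂ (algebraMap R K) t = 0 := by
      calc _ = algebraMap R K (h ^ n + ∑ i ∈ Finset.Icc 1 n, c i * h ^ (n - i)) := by
            simp only [p, eval₂_add, eval₂_finsetSum, eval₂_mul, eval₂_C, eval₂_X_pow, mul_add,
              map_add, map_sum, map_mul, map_pow, ← hat, mul_pow]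
            rw [Finset.mul_sum]
            congr 1
            refine Finset.sum_congr rfl fun i hi => ?_
            have hsplit : algebraMap R K a ^ n =
                algebraMap R K a ^ i * algebraMap R K a ^ (n - i) := by
              rw [← pow_add, Nat.add_sub_of_le (Finset.mem_Icc.mp hi).2]
            rw [hd i hi, map_mul, map_pow, hsplit]
            ring
        _ = 0 := by rw [heq, map_zero]
    exact (mul_eq_zero.mp this).resolve_left (pow_ne_zero _ ha')
  obtain ⟨k, hk⟩ := IsIntegrallyClosed.algebraMap_eq_of_integral
    ⟨p, monic_X_pow_add_sum_C_mul_X_pow_sub n d, hroot⟩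
  exact ⟨k, IsFractionRing.injective R K (by rw [map_mul, hk, hat])⟩

theorem idealIntegralClosure_subset_self [IsDomain R] [IsPrincipalIdealRing R] (I : Ideal R) :
    idealIntegralClosure I ⊆ I := by
  obtain ⟨a, rfl⟩ := IsPrincipalIdealRing.principal I
  exact fun h hh => Ideal.mem_span_singleton.mpr (dvd_of_mem_idealIntegralClosure_span_singleton hh)

theorem map_le_of_idealIntegralClosure_eq (φ : R →+* S) {I J : Ideal R}
    (hIJ : idealIntegralClosure I = idealIntegralClosure J) {K : Ideal S}
    (hK : idealIntegralClosure K ⊆ K) (hI : I.map φ ≤ K) : J.map φ ≤ K :=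
  Ideal.map_le_iff_le_comap.mpr fun _ hg => hK <| idealIntegralClosure_mono hI <|
    map_mem_idealIntegralClosure_map φ (hIJ ▸ subset_idealIntegralClosure J hg)

theorem map_le_iff_of_idealIntegralClosure_eq [IsDomain S] [IsPrincipalIdealRing S]
    (φ : R →+* S) {I J : Ideal R} (hIJ : idealIntegralClosure I = idealIntegralClosure J)
    (K : Ideal S) : I.map φ ≤ K ↔ J.map φ ≤ K :=
  ⟨map_le_of_idealIntegralClosure_eq φ hIJ (idealIntegralClosure_subset_self K),
    map_le_of_idealIntegralClosure_eq φ hIJ.symm (idealIntegralClosure_subset_self K)⟩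

end IdealIntegralClosure

theorem MvPolynomial.forall_eval_mem_iff_map_span_le {σ ι R : Type*} [CommRing R]
    (f : ι → MvPolynomial σ R) (y : σ → R) (K : Ideal R) :
    (∀ i, eval y (f i) ∈ K) ↔ (Ideal.span (Set.range f)).map (eval y) ≤ K := by
  rw [Ideal.map_span, Ideal.span_le, ← Set.range_comp, Set.range_subset_iff]
  rfl

theorem greenberg_function_eq_of_integralClosure_eq_general {V : Type u} [CommRing V] [IsDomain V]
    [IsDiscreteValuationRing V]
    {m r q : ℕ} (f : Fin r → MvPolynomial (Fin m) V) (g : Fin q → MvPolynomial (Fin m) V)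
    (hIJ : idealIntegralClosure (Ideal.span (Set.range f)) =
      idealIntegralClosure (Ideal.span (Set.range g))) :
    greenbergFunction f = greenbergFunction g := by
  have hmem : ∀ (K : Ideal V) (y : Fin m → V),
      (∀ i, MvPolynomial.eval y (f i) ∈ K) ↔ (∀ j, MvPolynomial.eval y (g j) ∈ K) := by
    intro K y
    simp only [MvPolynomial.forall_eval_mem_iff_map_span_le]
    exact map_le_iff_of_idealIntegralClosure_eq (MvPolynomial.eval y) hIJ K
  have hzero : ∀ y : Fin m → V,
      (∀ i, MvPolynomial.eval y (f i) = 0) ↔ (∀ j, MvPolynomial.eval y (g j) = 0) := by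
    simpa only [Ideal.mem_bot] using hmem ⊥
  funext c
  simp only [greenbergFunction, hmem, hzero]

/-- **The Greenberg function is an invariant of the integral closure of the ideal.**
Let `V` be a Henselian discrete valuation ring (with separable completion of the fraction
field in positive characteristic), and let `f`, `g` be two vectors of polynomials in
`y = (y_1, …, y_m)` over `V` generating ideals `I` and `J` of `V[y]`.  If `I` and `J` have
the same integral closure, then the Greenberg functions of `f` and `g` coincide. -/
theorem greenberg_function_eq_of_integralClosure_eq {V : Type u} [CommRing V] [IsDomain V]
    [IsDiscreteValuationRing V] [HenselianLocalRing V]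
    (hsep : ringChar (FractionRing V) ≠ 0 → HasSeparableCompletionFraction V)
    {m r q : ℕ} (f : Fin r → MvPolynomial (Fin m) V) (g : Fin q → MvPolynomial (Fin m) V)
    (hIJ : idealIntegralClosure (Ideal.span (Set.range f)) =
      idealIntegralClosure (Ideal.span (Set.range g))) :
    greenbergFunction f = greenbergFunction g :=
  greenberg_function_eq_of_integralClosure_eq_general f g hIJ
end

section
/- Approximate solutions with separated variables yield exact formal solutions over ℂ: Let f(x,y) ∈ ℂ[x,y]^r with x = (x₁,…,xₙ), y = (y₁,…,y_m), and for each 1 ≤ i ≤ m let J_i be a subset of {1,…,n}. Assume that for every c ∈ ℕ there exist polynomials ȳ_i^{(c)} ∈ ℂ[x_j : j ∈ J_i] (1 ≤ i ≤ m) such that f_k(x, ȳ^{(c)}(x)) ∈ (x)^c for all 1 ≤ k ≤ r. Then there exist formal power series ỹ_i ∈ ℂ⟦x_j : j ∈ J_i⟧ (1 ≤ i ≤ m) such that f_k(x, ỹ(x)) = 0 for all 1 ≤ k ≤ r. -/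
/-!
Treat the coefficients of the unknown series as indeterminates. The families `y` with `y i` in
`K⟦x_j : j ∈ J i⟧` are exactly the specializations of one generic family whose coefficients are
countably many variables, and `f (x, y) = 0` becomes the system of polynomial equations formed by
the coefficients of `f (x, y_generic)`. Finitely many of these equations only involve monomials of
bounded degree, so an approximate solution of high enough order satisfies them: the equations
generate a proper ideal. Over an uncountable algebraically closed field, a proper ideal in
countably many variables has a zero, and that zero specializes the generic family to a solution.
-/

open Cardinal

theorem Algebra.isAlgebraic_of_rank_le_aleph0 {F E : Type*} [Field F] [Field E] [Algebra F E]
    (hF : ℵ₀ < #F) (hE : Module.rank F E ≤ ℵ₀) : Algebra.IsAlgebraic F E := by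
  refine ⟨fun x => by_contra fun hx => ?_⟩
  -- the `(x - a)⁻¹`, `a ∈ F`, would be uncountably many linearly independent vectors
  have hle := Transcendental.linearIndependent_sub_inv (x := x) hx |>.cardinal_lift_le_rank
  have hE' := Cardinal.lift_le.mpr hE
  rw [Cardinal.lift_aleph0] at hE'
  exact (hle.trans hE').not_gt (by simpa using hF)

theorem MvPolynomial.exists_eval_eq_zero_of_ne_top {K V : Type*} [Field K] [IsAlgClosed K]
    (hK : ℵ₀ < #K) [Countable V] {I : Ideal (MvPolynomial V K)} (hI : I ≠ ⊤) :
    ∃ x : V → K, ∀ p ∈ I, eval x p = 0 := by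
  obtain ⟨M, hM, hIM⟩ := Ideal.exists_le_maximal I hI
  let := Ideal.Quotient.field M
  have hrank : Module.rank K (MvPolynomial V K ⧸ M) ≤ ℵ₀ :=
    ((Ideal.Quotient.mkₐ K M).toLinearMap.rank_le_of_surjective
      (Ideal.Quotient.mkₐ_surjective K M)).trans (by simp [MvPolynomial.rank_eq_lift])
  have := Algebra.isAlgebraic_of_rank_le_aleph0 hK hrank
  let e : K ≃ₐ[K] MvPolynomial V K ⧸ M :=
    AlgEquiv.ofBijective (Algebra.ofId _ _) IsAlgClosed.algebraMap_bijective_of_isIntegral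
  let φ : MvPolynomial V K →ₐ[K] K := (e.symm : _ →ₐ[K] K).comp (Ideal.Quotient.mkₐ K M)
  refine ⟨φ ∘ X, fun p hp => ?_⟩
  rw [← aeval_eq_eval, ← aeval_unique φ]
  simp [φ, Ideal.Quotient.eq_zero_iff_mem.mpr (hIM hp)]

theorem Ideal.span_range_ne_top_of_forall_finset {A B ι : Type*} [CommSemiring A] [Semiring B]
    [Nontrivial B] {g : ι → A} (h : ∀ s : Finset ι, ∃ φ : A →+* B, ∀ i ∈ s, φ (g i) = 0) :
    Ideal.span (Set.range g) ≠ ⊤ := by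
  intro htop
  obtain ⟨c, hc⟩ :=
    Finsupp.mem_span_range_iff_exists_finsupp.mp ((Ideal.eq_top_iff_one _).mp htop)
  obtain ⟨φ, hφ⟩ := h c.support
  apply one_ne_zero (α := B)
  rw [← map_one φ, ← hc, Finsupp.sum, map_sum]
  exact Finset.sum_eq_zero fun i hi => by rw [smul_eq_mul, map_mul, hφ i hi, mul_zero]

theorem MvPolynomial.coe_aeval {K σ τ : Type*} [CommSemiring K] (g : τ → MvPolynomial σ K)
    (p : MvPolynomial τ K) :
    ((aeval g p : MvPolynomial σ K) : MvPowerSeries σ K) =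
      aeval (fun t => (g t : MvPowerSeries σ K)) p := by
  simpa using comp_aeval_apply (coeToMvPowerSeries.algHom K) p (f := g)

open MvPolynomial (aeval eval)
open MvPowerSeries (coeff map)

theorem MvPowerSeries.map_mvPolynomial_aeval {R σ τ A B : Type*} [CommSemiring R]
    [CommSemiring A] [CommSemiring B] [Algebra R A] [Algebra R B] (φ : A →ₐ[R] B)
    (g : τ → MvPowerSeries σ A) (p : MvPolynomial τ R) :
    map (φ : A →+* B) (MvPolynomial.aeval g p) =
      MvPolynomial.aeval (fun t => map (φ : A →+* B) (g t)) p :=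
  MvPolynomial.comp_aeval_apply g (MvPowerSeries.mapAlgHom φ) p

namespace SeparatedVariables

variable {K σ ι ρ : Type*} (J : ι → Set σ)

section CommSemiring

variable [CommSemiring K]

/-- `y i` only involves the variables `x_j`, `j ∈ J i`. -/
def IsSeparated (y : ι → MvPowerSeries σ K) : Prop :=
  ∀ i α, coeff α (y i) ≠ 0 → ↑α.support ⊆ J i

abbrev CoeffVar : Type _ := {p : ι × (σ →₀ ℕ) // ↑p.2.support ⊆ J p.1}

variable (K) in
open Classical in
noncomputable def genericSeries (i : ι) : MvPowerSeries σ (MvPolynomial (CoeffVar J) K) :=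
  fun α => if h : ↑α.support ⊆ J i then MvPolynomial.X ⟨(i, α), h⟩ else 0

open Classical in
theorem coeff_map_eval_genericSeries (x : CoeffVar J → K) (i : ι) (α : σ →₀ ℕ) :
    coeff α (map (eval x) (genericSeries K J i)) =
      if h : ↑α.support ⊆ J i then x ⟨(i, α), h⟩ else 0 := by
  rw [MvPowerSeries.coeff_map]
  split_ifs with h <;> simp [genericSeries, MvPowerSeries.coeff_apply, h]

theorem isSeparated_map_eval_genericSeries (x : CoeffVar J → K) :
    IsSeparated J fun i => map (eval x) (genericSeries K J i) := by
  intro i α hα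
  by_contra h
  rw [coeff_map_eval_genericSeries, dif_neg h] at hα
  exact hα rfl

theorem IsSeparated.exists_map_eval_genericSeries_eq {J : ι → Set σ} {y : ι → MvPowerSeries σ K}
    (hy : IsSeparated J y) : ∃ x, (fun i => map (eval x) (genericSeries K J i)) = y := by
  refine ⟨fun v => coeff v.1.2 (y v.1.1), funext fun i => MvPowerSeries.ext fun α => ?_⟩
  rw [coeff_map_eval_genericSeries]
  split_ifs with h
  · rfl
  · exact (not_imp_comm.mp (hy i α) h).symm

noncomputable def genericEquation (f : ρ → MvPolynomial (σ ⊕ ι) K) (q : ρ × (σ →₀ ℕ)) :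
    MvPolynomial (CoeffVar J) K :=
  coeff q.2 (aeval (Sum.elim MvPowerSeries.X (genericSeries K J)) (f q.1))

theorem eval_genericEquation (f : ρ → MvPolynomial (σ ⊕ ι) K) (x : CoeffVar J → K)
    (l : ρ) (β : σ →₀ ℕ) :
    eval x (genericEquation J f (l, β)) =
      coeff β (aeval (Sum.elim MvPowerSeries.X fun i => map (eval x) (genericSeries K J i))
        (f l)) := by
  rw [genericEquation, ← MvPowerSeries.coeff_map, ← MvPolynomial.coe_aeval_eq_eval,
    MvPowerSeries.map_mvPolynomial_aeval]
  congr 3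
  funext s
  cases s <;> simp

end CommSemiring

variable [Field K] [IsAlgClosed K] [Countable σ] [Countable ι]

theorem exists_isSeparated_aeval_eq_zero (hK : ℵ₀ < #K) (f : ρ → MvPolynomial (σ ⊕ ι) K)
    (happrox : ∀ c : ℕ, ∃ y : ι → MvPowerSeries σ K, IsSeparated J y ∧
      ∀ l β, β.degree < c → coeff β (aeval (Sum.elim MvPowerSeries.X y) (f l)) = 0) :
    ∃ y : ι → MvPowerSeries σ K, IsSeparated J y ∧
      ∀ l, aeval (Sum.elim MvPowerSeries.X y) (f l) = 0 := by
  have hproper : Ideal.span (Set.range (genericEquation J f)) ≠ ⊤ := by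
    refine Ideal.span_range_ne_top_of_forall_finset (B := K) fun s => ?_
    obtain ⟨y, hy, hdeg⟩ := happrox (s.sup (fun q => q.2.degree) + 1)
    obtain ⟨x, rfl⟩ := hy.exists_map_eval_genericSeries_eq
    refine ⟨eval x, fun q hq => ?_⟩
    rw [eval_genericEquation]
    exact hdeg _ _ (Nat.lt_succ_of_le (Finset.le_sup (f := fun q => q.2.degree) hq))
  obtain ⟨x, hx⟩ := MvPolynomial.exists_eval_eq_zero_of_ne_top hK hproper
  refine ⟨_, isSeparated_map_eval_genericSeries J x, fun l => MvPowerSeries.ext fun β => ?_⟩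
  rw [← eval_genericEquation]
  exact hx _ (Ideal.subset_span ⟨(l, β), rfl⟩)

end SeparatedVariables

open SeparatedVariables in
/-- **Separated-variables approximation** (Becker–Denef–Lipshitz–van den Dries).
Let `f` be a vector of polynomials over `ℂ` in `x = (x_1, …, x_n)` and `y = (y_1, …, y_m)`,
and for each `i` let `J i ⊆ {1, …, n}`.  If for every `c` there are polynomials
`ybar i ∈ ℂ[x_j : j ∈ J i]` with `f (x, ybar (x)) ≡ 0 mod (x) ^ c`, then there are formal
power series `ytil i ∈ ℂ⟦x_j : j ∈ J i⟧` with `f (x, ytil (x)) = 0`. -/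
theorem formal_solutions_with_separated_variables {n m r : ℕ}
    (f : Fin r → MvPolynomial (Fin n ⊕ Fin m) ℂ)
    (J : Fin m → Set (Fin n))
    (happrox : ∀ c : ℕ, ∃ ybar : Fin m → MvPolynomial (Fin n) ℂ,
      (∀ i, ∀ α ∈ (ybar i).support, (α.support : Set (Fin n)) ⊆ J i) ∧
      (∀ l, MvPolynomial.eval₂ MvPolynomial.C (Sum.elim MvPolynomial.X ybar) (f l) ∈
        (Ideal.span (Set.range (MvPolynomial.X : Fin n → MvPolynomial (Fin n) ℂ))) ^ c)) :
    ∃ ytil : Fin m → MvPowerSeries (Fin n) ℂ,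
      (∀ i, ∀ α : Fin n →₀ ℕ, MvPowerSeries.coeff α (ytil i) ≠ 0 →
        (α.support : Set (Fin n)) ⊆ J i) ∧
      (∀ l, MvPolynomial.eval₂ (MvPowerSeries.C (σ := Fin n) (R := ℂ)) (Sum.elim MvPowerSeries.X ytil)
        (f l) = 0) := by
  have hℂ : ℵ₀ < #ℂ := Cardinal.mk_complex ▸ Cardinal.aleph0_lt_continuum
  refine exists_isSeparated_aeval_eq_zero J hℂ f fun c => ?_
  obtain ⟨ybar, hsupp, hmem⟩ := happrox c
  refine ⟨fun i => ybar i, fun i α hα => hsupp i α ?_, fun l β hβ => ?_⟩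
  · rwa [MvPolynomial.coeff_coe, ← MvPolynomial.mem_support_iff] at hα
  · have hcoe : (Sum.elim MvPowerSeries.X fun i => (ybar i : MvPowerSeries (Fin n) ℂ)) =
        fun t => ↑(Sum.elim MvPolynomial.X ybar t) := by
      funext t
      cases t <;> simp
    rw [hcoe, ← MvPolynomial.coe_aeval, MvPolynomial.coeff_coe]
    exact (MvPolynomial.mem_pow_idealOfVars_iff' c _).mp (hmem l) β hβ
end

section
/- Linear equations have an Artin function bounded by c + c₀ (Artin–Rees): Let A be a Noetherian ring, I an ideal of A, and f(y) ∈ A[y]^r a vector of homogeneous linear forms in y = (y₁,…,y_m) (i.e. each f_k(y) = Σ_{i=1}^m a_{k,i} y_i with a_{k,i} ∈ A). Then there exists an integer c₀ ≥ 0 such that: for every c ∈ ℕ and every ȳ ∈ A^m with f_k(ȳ) ∈ I^{c+c₀} for all 1 ≤ k ≤ r, there exists ỹ ∈ A^m with f_k(ỹ) = 0 for all k and ỹ_i − ȳ_i ∈ I^c for all 1 ≤ i ≤ m. -/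
/-!
By Artin–Rees applied to the image `L` of `f : A ^ m → A ^ r, y ↦ (∑ i, a k i * y i)ₖ`, there is
`c₀` with `I ^ (c + c₀) A ^ r ∩ L ⊆ I ^ c L` for all `c`. So if `f ȳ` lies in `I ^ (c + c₀) A ^ r`,
then `f ȳ = f z` for some `z ∈ I ^ c A ^ m`, and `ỹ = ȳ - z` is an exact solution congruent to `ȳ`.
-/

theorem Ideal.mem_smul_top_pi_iff {R ι : Type*} [CommRing R] [Fintype ι] (I : Ideal R)
    (x : ι → R) : x ∈ I • (⊤ : Submodule R (ι → R)) ↔ ∀ i, x i ∈ I := by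
  classical
  constructor
  · refine fun hx => Submodule.smul_induction_on hx ?_ ?_
    · exact fun r hr y _ i => I.mul_mem_right _ hr
    · exact fun y z hy hz i => I.add_mem (hy i) (hz i)
  · intro hx
    rw [pi_eq_sum_univ x]
    exact Submodule.sum_mem _ fun i _ => Submodule.smul_mem_smul (hx i) Submodule.mem_top

section ArtinRees

variable {R M N : Type*} [CommRing R] [IsNoetherianRing R] [AddCommGroup M] [Module R M]
  [AddCommGroup N] [Module R N] [Module.Finite R N] (I : Ideal R) (f : M →ₗ[R] N)

theorem Ideal.exists_pow_add_smul_top_inf_range_le_map :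
    ∃ c₀ : ℕ, ∀ c : ℕ, I ^ (c + c₀) • ⊤ ⊓ LinearMap.range f ≤ Submodule.map f (I ^ c • ⊤) := by
  obtain ⟨c₀, hc₀⟩ := I.exists_pow_inf_eq_pow_smul (LinearMap.range f)
  refine ⟨c₀, fun c => ?_⟩
  calc I ^ (c + c₀) • ⊤ ⊓ LinearMap.range f
      = I ^ c • (I ^ c₀ • ⊤ ⊓ LinearMap.range f) := by
        rw [hc₀ _ (Nat.le_add_left c₀ c), Nat.add_sub_cancel]
    _ ≤ I ^ c • LinearMap.range f := smul_mono_right _ inf_le_right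
    _ = Submodule.map f (I ^ c • ⊤) := by rw [Submodule.map_smul'', Submodule.map_top]

theorem Ideal.exists_mem_ker_sub_mem_pow_smul_top :
    ∃ c₀ : ℕ, ∀ (c : ℕ) (y : M), f y ∈ I ^ (c + c₀) • (⊤ : Submodule R N) →
      ∃ y' ∈ LinearMap.ker f, y' - y ∈ I ^ c • (⊤ : Submodule R M) := by
  obtain ⟨c₀, hc₀⟩ := I.exists_pow_add_smul_top_inf_range_le_map f
  refine ⟨c₀, fun c y hy => ?_⟩
  obtain ⟨z, hz, hfz⟩ := hc₀ c ⟨hy, LinearMap.mem_range_self f y⟩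
  refine ⟨y - z, by simp [hfz], ?_⟩
  simpa using Submodule.neg_mem _ hz

end ArtinRees

/-- **Artin approximation for homogeneous linear equations** (via the Artin–Rees lemma).
Let `A` be a Noetherian ring, `I` an ideal of `A`, and `f_k (y) = ∑ i, a k i * y i`
(`1 ≤ k ≤ r`) a vector of homogeneous linear forms in `y = (y_1, …, y_m)` over `A`.  Then
there is `c₀ ≥ 0` such that for all `c`, every `ybar` with `f_k (ybar) ∈ I ^ (c + c₀)` for
all `k` is congruent modulo `I ^ c` to an exact solution of the linear system. -/
theorem artin_function_linear {A : Type*} [CommRing A] [IsNoetherianRing A] (I : Ideal A)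
    {m r : ℕ} (a : Fin r → Fin m → A) :
    ∃ c₀ : ℕ, ∀ c : ℕ, ∀ ybar : Fin m → A,
      (∀ k, ∑ i, a k i * ybar i ∈ I ^ (c + c₀)) →
      ∃ ytil : Fin m → A,
        (∀ k, ∑ i, a k i * ytil i = 0) ∧
        (∀ i, ytil i - ybar i ∈ I ^ c) := by
  obtain ⟨c₀, hc₀⟩ := I.exists_mem_ker_sub_mem_pow_smul_top (Matrix.of a).mulVecLin
  refine ⟨c₀, fun c ybar hy => ?_⟩
  obtain ⟨ytil, hker, hsub⟩ := hc₀ c ybar ((Ideal.mem_smul_top_pi_iff _ _).mpr hy)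
  exact ⟨ytil, congrFun hker, (Ideal.mem_smul_top_pi_iff _ _).mp hsub⟩
end
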